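/- arXiv:1911.01342 — 4 statements merged into one kernel-verified Lean document; each statement's English description precedes it below -/
import Mathlib

section
/- The burning number of the path on n vertices equals the ceiling of the square root of n. -/
/-!
After `r` rounds the fire lit in round `t + 1` has spread to distance at most `r - 1 - t`, so on a
path it covers at most `2 (r - 1 - t) + 1` vertices; summing, `r` rounds burn at most `r ^ 2`
vertices. Conversely, cutting `P_n` into consecutive blocks of sizes `2k - 1, …, 3, 1` (with
`n ≤ k ^ 2`) and lighting the centre of each block, largest first, burns the path in `k` rounds.
-/

open SimpleGraph

/-- The set of vertices burned after `t` rounds of the burning process on `G`,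
where `s i` is the source of fire chosen in round `i + 1`. -/
def burnSet {V : Type*} (G : SimpleGraph V) (s : ℕ → V) : ℕ → Set V
  | 0 => ∅
  | t + 1 => burnSet G s t ∪ {w | ∃ u ∈ burnSet G s t, G.Adj u w} ∪ {s t}

/-- The partial burning number `b(G, S)`: the least number of rounds needed to
burn every vertex of `S`. -/
noncomputable def pburn {V : Type*} (G : SimpleGraph V) (S : Set V) : ℕ :=
  sInf {r | ∃ s : ℕ → V, S ⊆ burnSet G s r}

/-- The burning number `b(G)`. -/
noncomputable def burn {V : Type*} (G : SimpleGraph V) : ℕ :=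
  pburn G Set.univ

/-- The ball of radius `t` around `v` in graph distance. -/
def gball {V : Type*} (G : SimpleGraph V) (v : V) (t : ℕ) : Set V :=
  {w | G.dist v w ≤ t}

/-- The `m × n` Cartesian grid `P_m □ P_n`; the first coordinate is the height (row). -/
def gridGraph (m n : ℕ) : SimpleGraph (Fin m × Fin n) :=
  (pathGraph m) □ (pathGraph n)

open Finset

section Burning

variable {V : Type*} {G : SimpleGraph V} {s : ℕ → V}

lemma burnSet_mono (G : SimpleGraph V) (s : ℕ → V) : Monotone (burnSet G s) :=
  monotone_nat_of_le_succ fun _ _ hx => Or.inl (Or.inl hx)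

lemma source_mem_burnSet (t : ℕ) : s t ∈ burnSet G s (t + 1) :=
  Or.inr rfl

lemma mem_burnSet_succ_of_adj {u w : V} {t : ℕ} (hu : u ∈ burnSet G s t) (h : G.Adj u w) :
    w ∈ burnSet G s (t + 1) :=
  Or.inl (Or.inr ⟨u, hu, h⟩)

lemma mem_burnSet_add_length {u w : V} (p : G.Walk u w) {t : ℕ} (hu : u ∈ burnSet G s t) :
    w ∈ burnSet G s (t + p.length) := by
  induction p generalizing t with
  | nil => exact hu
  | cons h q ih =>
    rw [Walk.length_cons, ← add_assoc, add_right_comm]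
    exact ih (mem_burnSet_succ_of_adj hu h)

theorem mem_burnSet_iff_exists_walk {r : ℕ} {w : V} :
    w ∈ burnSet G s r ↔ ∃ t, ∃ p : G.Walk (s t) w, t + p.length < r := by
  constructor
  · induction r generalizing w with
    | zero => rintro ⟨⟩
    | succ r ih =>
      rintro ((hw | ⟨u, hu, huw⟩) | rfl)
      · obtain ⟨t, p, hp⟩ := ih hw
        exact ⟨t, p, by omega⟩
      · obtain ⟨t, p, hp⟩ := ih hu
        exact ⟨t, p.concat huw, by rw [Walk.length_concat]; omega⟩
      · exact ⟨r, Walk.nil, by simp⟩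
  · rintro ⟨t, p, hp⟩
    exact burnSet_mono G s (by omega) (mem_burnSet_add_length p (source_mem_burnSet t))

theorem mem_burnSet_iff_exists_dist (hG : G.Preconnected) {r : ℕ} {w : V} :
    w ∈ burnSet G s r ↔ ∃ t, t + G.dist (s t) w < r := by
  rw [mem_burnSet_iff_exists_walk]
  constructor
  · rintro ⟨t, p, hp⟩
    exact ⟨t, lt_of_le_of_lt (by grw [dist_le p]) hp⟩
  · rintro ⟨t, ht⟩
    obtain ⟨p, hp⟩ := (hG (s t) w).exists_walk_length_eq_dist
    exact ⟨t, p, hp ▸ ht⟩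

end Burning

section PathGraph

variable {n : ℕ}

lemma pathGraph_natDist_le_length {i j : Fin n} (p : (pathGraph n).Walk i j) :
    Nat.dist i j ≤ p.length := by
  induction p with
  | nil => simp
  | cons h p ih =>
    rw [pathGraph_adj] at h
    simp only [Walk.length_cons, Nat.dist] at *
    omega

lemma pathGraph_exists_walk_length_eq {d : ℕ} {i j : Fin n} (h : (i : ℕ) + d = j) :
    ∃ p : (pathGraph n).Walk i j, p.length = d := by
  induction d generalizing i with
  | zero => exact ⟨Walk.nil.copy rfl (Fin.ext h), by simp⟩
  | succ d ih =>
    obtain ⟨p, hp⟩ := ih (i := ⟨i + 1, by omega⟩) (by simp only; omega)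
    exact ⟨Walk.cons (pathGraph_adj.mpr (Or.inl rfl)) p, by simp [hp]⟩

theorem pathGraph_dist (i j : Fin n) : (pathGraph n).dist i j = Nat.dist i j := by
  refine le_antisymm ?_ ?_
  · wlog hij : (i : ℕ) ≤ j generalizing i j
    · rw [dist_comm, Nat.dist_comm]
      exact this j i (by omega)
    obtain ⟨p, hp⟩ := pathGraph_exists_walk_length_eq (d := j - i) (i := i) (j := j) (by omega)
    exact (dist_le p).trans (by simp only [hp, Nat.dist]; omega)
  · obtain ⟨p, hp⟩ := (pathGraph_preconnected n i j).exists_walk_length_eq_dist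
    exact hp ▸ pathGraph_natDist_le_length p

theorem mem_burnSet_pathGraph_iff {s : ℕ → Fin n} {r : ℕ} {w : Fin n} :
    w ∈ burnSet (pathGraph n) s r ↔ ∃ t, t + Nat.dist (s t) w < r := by
  simp only [mem_burnSet_iff_exists_dist (pathGraph_preconnected n), pathGraph_dist]

lemma card_filter_natDist_le (c d : ℕ) :
    #{w : Fin n | Nat.dist c w ≤ d} ≤ 2 * d + 1 := by
  calc #{w : Fin n | Nat.dist c w ≤ d}
      ≤ #(Finset.Icc (c - d) (c + d)) := by
        refine Finset.card_le_card_of_injOn Fin.val (fun w hw => ?_) Fin.val_injective.injOn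
        have := (mem_filter.1 (mem_coe.1 hw)).2
        rw [mem_coe, mem_Icc]
        unfold Nat.dist at this
        omega
    _ ≤ 2 * d + 1 := by rw [Nat.card_Icc]; omega

lemma sum_range_two_mul_sub_add_one (r : ℕ) : ∑ t ∈ range r, (2 * (r - 1 - t) + 1) = r ^ 2 := by
  induction r with
  | zero => simp
  | succ r ih =>
    have hshift : ∑ t ∈ range r, (2 * (r + 1 - 1 - (t + 1)) + 1) = r ^ 2 :=
      ih ▸ sum_congr rfl fun t _ => by omega
    rw [sum_range_succ', hshift, Nat.add_sub_cancel, Nat.sub_zero]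
    ring

theorem le_sq_of_univ_subset_burnSet_pathGraph {s : ℕ → Fin n} {r : ℕ}
    (h : Set.univ ⊆ burnSet (pathGraph n) s r) : n ≤ r ^ 2 :=
  calc n = #(univ : Finset (Fin n)) := (card_fin n).symm
    _ ≤ #((range r).biUnion fun t => {w : Fin n | Nat.dist (s t) w ≤ r - 1 - t}) :=
        card_le_card fun w _ => by
          obtain ⟨t, ht⟩ := mem_burnSet_pathGraph_iff.1 (h (Set.mem_univ w))
          simp only [mem_biUnion, mem_range, mem_filter, mem_univ, true_and]
          exact ⟨t, by omega, by omega⟩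
    _ ≤ ∑ t ∈ range r, #{w : Fin n | Nat.dist (s t) w ≤ r - 1 - t} := card_biUnion_le
    _ ≤ ∑ t ∈ range r, (2 * (r - 1 - t) + 1) := sum_le_sum fun t _ => card_filter_natDist_le _ _
    _ = r ^ 2 := sum_range_two_mul_sub_add_one r

theorem exists_univ_subset_burnSet_pathGraph (hn : 1 ≤ n) {k : ℕ} (hk : n ≤ k ^ 2) :
    ∃ s : ℕ → Fin n, Set.univ ⊆ burnSet (pathGraph n) s k := by
  -- The source of radius `i = k - 1 - t` sits at the middle `i * (i + 1)` of the block
  -- `[i ^ 2, (i + 1) ^ 2)`, clamped to the path; `w` lies in the block of `i = Nat.sqrt w`.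
  refine ⟨fun t => ⟨min ((k - 1 - t) * (k - t)) (n - 1), by omega⟩, fun w _ => ?_⟩
  set i := Nat.sqrt w
  have hlo : i * i ≤ w := Nat.sqrt_le w
  have hhi : w < (i + 1) * (i + 1) := Nat.lt_succ_sqrt w
  have hik : i < k := Nat.sqrt_lt'.2 (by omega)
  refine mem_burnSet_pathGraph_iff.2 ⟨k - 1 - i, ?_⟩
  have hrad : k - 1 - (k - 1 - i) = i := by omega
  have hrad' : k - (k - 1 - i) = i + 1 := by omega
  simp only [hrad, hrad', Nat.dist, mul_add, add_mul, mul_one, one_mul] at hhi ⊢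
  omega

end PathGraph

lemma Nat.ceil_sqrt_le_iff_le_sq {n r : ℕ} : ⌈√(n : ℝ)⌉₊ ≤ r ↔ n ≤ r ^ 2 := by
  rw [Nat.ceil_le, Real.sqrt_le_left (Nat.cast_nonneg _)]
  norm_cast

/-- The burning number of the path on `n` vertices equals `⌈√n⌉`. -/
theorem burn_pathGraph (n : ℕ) (hn : 1 ≤ n) :
    burn (pathGraph n) = ⌈Real.sqrt n⌉₊ := by
  refine IsLeast.csInf_eq ⟨?_, ?_⟩
  · exact exists_univ_subset_burnSet_pathGraph hn (Nat.ceil_sqrt_le_iff_le_sq.1 le_rfl)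
  · rintro r ⟨s, hs⟩
    exact Nat.ceil_sqrt_le_iff_le_sq.2 (le_sq_of_univ_subset_burnSet_pathGraph hs)
end

section
/- Adding a pendant vertex does not change the partial burning number: if u is a new vertex attached to a vertex v of H by a single edge, then b(H, X) = b(H + u + uv, X) for any X ⊆ V(H). -/
open SimpleGraph

/-- The graph `H + u + uv` obtained from `H` by adding a new pendant vertex `u`
(modeled as `none : Option V`) joined only to `v`. -/
def addPendant {V : Type*} (H : SimpleGraph V) (v : V) : SimpleGraph (Option V) :=
  SimpleGraph.fromRel (fun a b =>
    (∃ x y, a = some x ∧ b = some y ∧ H.Adj x y) ∨ (a = none ∧ b = some v))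

/-!
Burning only ever spreads along edges, so a map that sends every edge to an edge or collapses
it to a vertex carries each burning sequence to one that burns the image just as fast. The
inclusion `H → H + u + uv` is such a map, and so is the retraction sending `u` to `v`; since
the retraction fixes `X`, a number of rounds suffices to burn `X` in one graph exactly when it
suffices in the other.
-/

section WeakHom

variable {V W : Type*} {G : SimpleGraph V} {G' : SimpleGraph W} {f : V → W}

theorem image_burnSet_subset (hf : ∀ ⦃a b⦄, G.Adj a b → f a = f b ∨ G'.Adj (f a) (f b))
    (s : ℕ → V) (t : ℕ) : f '' burnSet G s t ⊆ burnSet G' (f ∘ s) t := by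
  induction t with
  | zero => simp [burnSet]
  | succ t ih =>
    rintro _ ⟨a, (ha | ⟨b, hb, hba⟩) | rfl, rfl⟩
    · exact Or.inl (Or.inl (ih ⟨a, ha, rfl⟩))
    · rcases hf hba with hab | hadj
      · exact Or.inl (Or.inl (hab ▸ ih ⟨b, hb, rfl⟩))
      · exact Or.inl (Or.inr ⟨f b, ih ⟨b, hb, rfl⟩, hadj⟩)
    · exact Or.inr rfl

theorem pburn_image_eq_of_leftInvOn {g : W → V}
    (hf : ∀ ⦃a b⦄, G.Adj a b → f a = f b ∨ G'.Adj (f a) (f b))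
    (hg : ∀ ⦃a b⦄, G'.Adj a b → g a = g b ∨ G.Adj (g a) (g b))
    {S : Set V} (hgf : Set.LeftInvOn g f S) : pburn G' (f '' S) = pburn G S := by
  unfold pburn
  congr 1
  ext r
  constructor
  · rintro ⟨s, hs⟩
    refine ⟨g ∘ s, ?_⟩
    rw [← hgf.image_image]
    exact (Set.image_mono hs).trans (image_burnSet_subset hg s r)
  · rintro ⟨s, hs⟩
    exact ⟨f ∘ s, (Set.image_mono hs).trans (image_burnSet_subset hf s r)⟩

end WeakHom

section AddPendant

variable {V : Type*} (H : SimpleGraph V) (v : V)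

theorem addPendant_adj_some_some {x y : V} :
    (addPendant H v).Adj (some x) (some y) ↔ H.Adj x y := by
  simp only [addPendant, fromRel_adj, ne_eq, Option.some.injEq, reduceCtorEq, false_and, or_false,
    exists_and_left, exists_eq_left']
  exact ⟨fun ⟨_, h⟩ => h.elim id fun h => h.symm, fun h => ⟨h.ne, Or.inl h⟩⟩

theorem addPendant_adj_getD {a b : Option V} (h : (addPendant H v).Adj a b) :
    a.getD v = b.getD v ∨ H.Adj (a.getD v) (b.getD v) := by
  rcases h with ⟨-, (⟨x, y, rfl, rfl, hxy⟩ | ⟨rfl, rfl⟩) | (⟨x, y, rfl, rfl, hxy⟩ | ⟨rfl, rfl⟩)⟩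
  · exact Or.inr hxy
  · exact Or.inl rfl
  · exact Or.inr hxy.symm
  · exact Or.inl rfl

end AddPendant

theorem pburn_addPendant_general {V : Type*} (H : SimpleGraph V) (v : V) (X : Set V) :
    pburn (addPendant H v) (some '' X) = pburn H X :=
  pburn_image_eq_of_leftInvOn
    (fun _ _ h => Or.inr ((addPendant_adj_some_some H v).mpr h))
    (fun _ _ h => addPendant_adj_getD H v h)
    (fun _ _ => rfl)

/-- Adding a pendant vertex does not change the partial burning number:
`b(H, X) = b(H + u + uv, X)`. -/
theorem pburn_addPendant {V : Type*} [Fintype V] (H : SimpleGraph V) (v : V) (X : Set V) :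
    pburn (addPendant H v) (some '' X) = pburn H X :=
  pburn_addPendant_general H v X
end

section
/- Let P^{(1)},…,P^{(k)} be full horizontal rows of the grid G_{m,n} at heights h_1 < h_2 < … < h_k with h_i − h_{i−1} ≥ ⌈√(kn)⌉ for 2 ≤ i ≤ k, and let 𝒫 be the union of their vertex sets. Then the partial burning number satisfies ⌈√(kn)⌉ ≤ b(G_{m,n}, 𝒫) ≤ ⌈√(kn)⌉ + k − 1. -/
open SimpleGraph

/-!
Lower bound: after `t` rounds the fire lit in round `j + 1` fills a ball of radius `t - 1 - j`.
When distinct rows are more than `t` apart, the antidiagonal index `x + y` is injective on such a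
ball restricted to the rows, so it contains at most `2 (t - 1 - j) + 1` of their vertices.
Summing over `j`, `t` rounds burn at most `t²` of the `kn` row vertices, hence `t ≥ ⌈√(kn)⌉`.

Upper bound: in `T = ⌈√(kn)⌉ + k - 1` rounds, a source with remaining time `τ` burns `2τ - 1`
consecutive vertices of its row. Row `i` gets the sources with remaining time in
`(bᵢ, bᵢ₊₁]`, where `bᵢ = ⌈√(in)⌉ + i - 1`; laid end to end their intervals have total length
`bᵢ₊₁² - bᵢ² ≥ n`.
-/

open Finset Function

section Burning

variable {V : Type*} {G : SimpleGraph V} {s : ℕ → V}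

lemma burnSet_monotone : Monotone (burnSet G s) :=
  monotone_nat_of_le_succ fun _ _ hw => Or.inl (Or.inl hw)

lemma mem_burnSet_of_walk {u w : V} {t : ℕ} (hu : u ∈ burnSet G s t) (W : G.Walk u w) :
    w ∈ burnSet G s (t + W.length) := by
  induction W generalizing t with
  | nil => exact hu
  | cons h W ih =>
    rw [Walk.length_cons, ← add_assoc, add_right_comm]
    exact ih (Or.inl (Or.inr ⟨_, hu, h⟩))

theorem mem_burnSet_iff {t : ℕ} {w : V} :
    w ∈ burnSet G s t ↔ ∃ j : ℕ, (j : ℕ∞) + G.edist (s j) w < t := by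
  constructor
  · induction t generalizing w with
    | zero => simp [burnSet]
    | succ t ih =>
      have ht : (t : ℕ∞) < (t + 1 : ℕ) := by exact_mod_cast t.lt_add_one
      rintro ((hw | ⟨u, hu, huw⟩) | rfl)
      · obtain ⟨j, hj⟩ := ih hw
        exact ⟨j, hj.trans ht⟩
      · obtain ⟨j, hj⟩ := ih hu
        refine ⟨j, lt_of_le_of_lt ?_ ht⟩
        calc (j : ℕ∞) + G.edist (s j) w ≤ j + (G.edist (s j) u + G.edist u w) :=
              add_le_add_right SimpleGraph.edist_triangle _
          _ = j + G.edist (s j) u + 1 := by rw [edist_eq_one_iff_adj.mpr huw, add_assoc]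
          _ ≤ t := Order.add_one_le_of_lt hj
      · exact ⟨t, by simpa using ht⟩
  · rintro ⟨j, hj⟩
    obtain ⟨W, hW⟩ := exists_walk_of_edist_ne_top (ne_top_of_lt (lt_of_le_of_lt le_add_self hj))
    rw [← hW] at hj
    norm_cast at hj
    have hsrc : s j ∈ burnSet G s (j + 1) := Or.inr rfl
    exact burnSet_monotone (show j + 1 + W.length ≤ t by omega) (mem_burnSet_of_walk hsrc W)

lemma subset_burnSet_of_forall_edist_lt {S : Set V} {T : ℕ} (c : ℕ → V)
    (h : ∀ w ∈ S, ∃ τ ≤ T, G.edist (c τ) w < τ) :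
    S ⊆ burnSet G (fun j => c (T - j)) T := by
  intro w hw
  obtain ⟨τ, hτT, hτ⟩ := h w hw
  obtain ⟨d, hd⟩ := ENat.ne_top_iff_exists.mp (ne_top_of_lt hτ)
  rw [← hd] at hτ
  norm_cast at hτ
  refine mem_burnSet_iff.mpr ⟨T - τ, ?_⟩
  rw [Nat.sub_sub_self hτT, ← hd]
  exact_mod_cast (show T - τ + d < T by omega)

lemma sum_range_reflect_odd_eq_sq (t : ℕ) : ∑ j ∈ range t, (2 * (t - 1 - j) + 1) = t ^ 2 := by
  induction t with
  | zero => simp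
  | succ t ih =>
    have hshift : ∀ j ∈ range t, 2 * (t + 1 - 1 - (j + 1)) + 1 = 2 * (t - 1 - j) + 1 :=
      fun j _ => by omega
    rw [sum_range_succ', sum_congr rfl hshift, ih, Nat.add_sub_cancel, Nat.sub_zero]
    ring

lemma card_le_sq_of_subset_burnSet {S : Finset V} {t : ℕ}
    (hball : ∀ v (ρ : ℕ), ρ < t → #{w ∈ S | G.edist v w ≤ ρ} ≤ 2 * ρ + 1)
    (hS : ↑S ⊆ burnSet G s t) : #S ≤ t ^ 2 := by
  classical
  have hcover : S ⊆ (range t).biUnion fun j => {w ∈ S | G.edist (s j) w ≤ (t - 1 - j : ℕ)} := by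
    intro w hw
    obtain ⟨j, hj⟩ := mem_burnSet_iff.mp (hS hw)
    obtain ⟨d, hd⟩ := ENat.ne_top_iff_exists.mp (ne_top_of_lt (lt_of_le_of_lt le_add_self hj))
    rw [← hd] at hj
    norm_cast at hj
    refine mem_biUnion.mpr ⟨j, mem_range.mpr (by omega), mem_filter.mpr ⟨hw, ?_⟩⟩
    rw [← hd]
    exact_mod_cast (show d ≤ t - 1 - j by omega)
  calc #S ≤ ∑ j ∈ range t, #{w ∈ S | G.edist (s j) w ≤ (t - 1 - j : ℕ)} :=
        (card_le_card hcover).trans card_biUnion_le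
    _ ≤ ∑ j ∈ range t, (2 * (t - 1 - j) + 1) :=
        sum_le_sum fun j hj => hball _ _ (by simp at hj; omega)
    _ = t ^ 2 := sum_range_reflect_odd_eq_sq t

end Burning

lemma pathGraph_natDist_le_length_s8 {n : ℕ} {a b : Fin n} (W : (pathGraph n).Walk a b) :
    Nat.dist a b ≤ W.length := by
  induction W with
  | nil => simp
  | cons h W ih =>
    rw [Walk.length_cons]
    rcases pathGraph_adj.mp h with h | h <;> simp only [Nat.dist] at ih ⊢ <;> omega

lemma pathGraph_edist_le_of_add_eq {n d : ℕ} {a b : Fin n} (h : (a : ℕ) + d = b) :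
    (pathGraph n).edist a b ≤ d := by
  induction d generalizing b with
  | zero => simp [Fin.ext (h.symm.trans (add_zero _)).symm]
  | succ d ih =>
    let b' : Fin n := ⟨a + d, by omega⟩
    calc (pathGraph n).edist a b ≤ (pathGraph n).edist a b' + (pathGraph n).edist b' b :=
          SimpleGraph.edist_triangle
      _ ≤ d + 1 := by
          gcongr
          · exact ih rfl
          · exact (edist_eq_one_iff_adj.mpr (pathGraph_adj.mpr (Or.inl (by simp [b']; omega)))).le
      _ = (d + 1 : ℕ) := by norm_cast

theorem pathGraph_edist {n : ℕ} (a b : Fin n) : (pathGraph n).edist a b = Nat.dist a b := by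
  refine le_antisymm ?_ ?_
  · rcases le_total (a : ℕ) b with hab | hab
    · exact pathGraph_edist_le_of_add_eq (by simp [Nat.dist_eq_sub_of_le hab]; omega)
    · rw [edist_comm, Nat.dist_comm]
      exact pathGraph_edist_le_of_add_eq (by simp [Nat.dist_eq_sub_of_le hab]; omega)
  · obtain ⟨W, hW⟩ := (pathGraph_preconnected n a b).exists_walk_length_eq_edist
    rw [← hW]
    exact_mod_cast pathGraph_natDist_le_length_s8 W

theorem gridGraph_edist {m n : ℕ} (p q : Fin m × Fin n) :
    (gridGraph m n).edist p q = (Nat.dist p.1 q.1 + Nat.dist p.2 q.2 : ℕ) := by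
  rw [gridGraph, edist_boxProd, pathGraph_edist, pathGraph_edist, Nat.cast_add]

/-- Vertices of `S` in distinct rows are more than `2ρ` apart along every antidiagonal, so the
antidiagonal index `p.1 + p.2` is injective on a ball of radius `ρ`. -/
lemma card_filter_gridGraph_edist_le {m n ρ : ℕ} {S : Finset (Fin m × Fin n)}
    (hS : ∀ p ∈ S, ∀ q ∈ S, p.1 ≠ q.1 → ρ < Nat.dist p.1 q.1) (v : Fin m × Fin n) :
    #{q ∈ S | (gridGraph m n).edist v q ≤ ρ} ≤ 2 * ρ + 1 := by
  have hball : ∀ q ∈ ({q ∈ S | (gridGraph m n).edist v q ≤ ρ} : Finset _),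
      q ∈ S ∧ Nat.dist v.1 q.1 + Nat.dist v.2 q.2 ≤ ρ := fun q hq => by
    rw [mem_filter, gridGraph_edist] at hq
    exact ⟨hq.1, by exact_mod_cast hq.2⟩
  calc #{q ∈ S | (gridGraph m n).edist v q ≤ ρ}
      ≤ #(Icc ((v.1 + v.2 : ℕ) - ρ) (v.1 + v.2 + ρ)) := by
        refine card_le_card_of_injOn (fun q => (q.1 + q.2 : ℕ)) (fun q hq => ?_) ?_
        · have := (hball q hq).2
          simp only [Nat.dist, coe_Icc, Set.mem_Icc] at this ⊢
          omega
        · intro p hp q hq hpq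
          obtain ⟨hpS, hp⟩ := hball p hp
          obtain ⟨hqS, hq⟩ := hball q hq
          simp only at hpq
          by_cases hrow : p.1 = q.1
          · exact Prod.ext hrow (Fin.ext (by rw [hrow] at hpq; omega))
          · have := hS p hpS q hqS hrow
            simp only [Nat.dist] at this hp hq
            omega
    _ ≤ 2 * ρ + 1 := by rw [Nat.card_Icc]; omega

lemma lt_ceil_sqrt_iff {x : ℝ} {t : ℕ} : t < ⌈√x⌉₊ ↔ (t : ℝ) ^ 2 < x := by
  rw [Nat.lt_ceil, Real.lt_sqrt (Nat.cast_nonneg t)]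

lemma le_ceil_sqrt_sq (N : ℕ) : N ≤ ⌈√(N : ℝ)⌉₊ ^ 2 := by
  by_contra h
  have : ((⌈√(N : ℝ)⌉₊ : ℕ) : ℝ) ^ 2 < N := by exact_mod_cast not_le.mp h
  exact lt_irrefl _ (lt_ceil_sqrt_iff.mpr this)

lemma ceil_sqrt_sub_one_sq_le (N : ℕ) : (⌈√(N : ℝ)⌉₊ - 1) ^ 2 ≤ N := by
  rcases Nat.eq_zero_or_pos ⌈√(N : ℝ)⌉₊ with h | h
  · simp [h]
  · exact_mod_cast (lt_ceil_sqrt_iff.mp (Nat.sub_lt h one_pos)).le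

/-- Row `i` is burned by the sources whose remaining time lies in
`(blockEnd n i, blockEnd n (i + 1)]`; truncated subtraction makes `blockEnd n 0 = 0`. -/
noncomputable def blockEnd (n i : ℕ) : ℕ := ⌈√((i : ℝ) * n)⌉₊ + i - 1

lemma blockEnd_sq_add_le (n i : ℕ) : blockEnd n i ^ 2 + n ≤ blockEnd n (i + 1) ^ 2 := by
  set x := ⌈√(((i + 1) * n : ℕ) : ℝ)⌉₊
  set y := ⌈√((i * n : ℕ) : ℝ)⌉₊ - 1
  have hx : (i + 1) * n ≤ x ^ 2 := le_ceil_sqrt_sq _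
  have hy : y ^ 2 ≤ i * n := ceil_sqrt_sub_one_sq_le _
  have hyx : y ≤ x := (Nat.pow_le_pow_iff_left two_ne_zero).mp (by nlinarith)
  have hle : blockEnd n i ≤ y + i := by simp only [blockEnd, y, Nat.cast_mul]; omega
  have heq : blockEnd n (i + 1) = x + i := by simp only [blockEnd, x, Nat.cast_mul]; omega
  rw [heq]
  nlinarith [Nat.pow_le_pow_left hle 2]

lemma blockEnd_strictMono {n : ℕ} (hn : 0 < n) : StrictMono (blockEnd n) :=
  strictMono_nat_of_lt_succ fun i =>
    (Nat.pow_lt_pow_iff_left two_ne_zero).mp (by have := blockEnd_sq_add_le n i; omega)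

/-- Sources with remaining times `b, b - 1, …, a + 1`, burning intervals of lengths
`2b - 1, 2b - 3, …, 2a + 1` laid end to end, cover a path of `b² - a²` vertices; the point `z`
is reached by the source with remaining time `⌈√(b² - z)⌉`. -/
lemma exists_cover_path {n a b : ℕ} (hn : 0 < n) (hab : a ^ 2 + n ≤ b ^ 2) :
    ∃ g : ℕ → Fin n, ∀ z : Fin n, ∃ τ, a < τ ∧ τ ≤ b ∧ Nat.dist (g τ) z < τ := by
  refine ⟨fun τ => ⟨min (b ^ 2 - τ ^ 2 + τ - 1) (n - 1), by omega⟩, fun z => ?_⟩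
  set q := Nat.sqrt (b ^ 2 - z - 1)
  have hq : q ^ 2 ≤ b ^ 2 - z - 1 := Nat.sqrt_le' _
  have hq' : b ^ 2 - z - 1 < (q + 1) ^ 2 := Nat.lt_succ_sqrt' _
  have hz : (z : ℕ) < n := z.isLt
  refine ⟨q + 1, (Nat.pow_lt_pow_iff_left two_ne_zero).mp (by omega),
    Nat.succ_le_of_lt ((Nat.pow_lt_pow_iff_left two_ne_zero).mp (by omega)), ?_⟩
  have hsq : (q + 1) ^ 2 = q ^ 2 + 2 * q + 1 := by ring
  simp only [Nat.dist]
  omega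

lemma exists_forall_mem_eq_of_pairwise_disjoint {ι α : Type*} [Nonempty ι] {A : ι → Set α}
    (hA : Pairwise (Disjoint on A)) : ∃ f : α → ι, ∀ i, ∀ a ∈ A i, f a = i := by
  classical
  refine ⟨fun a => if h : ∃ i, a ∈ A i then h.choose else Classical.arbitrary ι,
    fun i a ha => ?_⟩
  have hex : ∃ i, a ∈ A i := ⟨i, ha⟩
  simp only [dif_pos hex]
  by_contra hne
  exact Set.disjoint_left.mp (hA hne) hex.choose_spec ha

theorem exists_rows_subset_burnSet {m n k : ℕ} (hk : 1 ≤ k) (hn : 1 ≤ n) (hgt : Fin k → Fin m) :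
    ∃ s, {p : Fin m × Fin n | ∃ i, p.1 = hgt i} ⊆ burnSet (gridGraph m n) s (blockEnd n k) := by
  have hB := blockEnd_strictMono hn
  choose g hg using fun i : Fin k => exists_cover_path hn (blockEnd_sq_add_le n i)
  have : Nonempty (Fin k) := ⟨⟨0, hk⟩⟩
  obtain ⟨row, hrow⟩ := exists_forall_mem_eq_of_pairwise_disjoint
    (A := fun i : Fin k => Set.Ioc (blockEnd n i) (blockEnd n (i + 1)))
    (hB.monotone.pairwise_disjoint_on_Ioc_succ.comp_of_injective Fin.val_injective)
  refine ⟨_, subset_burnSet_of_forall_edist_lt (fun τ => (hgt (row τ), g (row τ) τ)) ?_⟩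
  rintro ⟨x, z⟩ ⟨i, rfl⟩
  obtain ⟨τ, hτa, hτb, hτ⟩ := hg i z
  refine ⟨τ, hτb.trans (hB.monotone (Nat.succ_le_of_lt i.isLt)), ?_⟩
  rw [hrow i τ ⟨hτa, hτb⟩, gridGraph_edist, Nat.dist_self, zero_add]
  exact_mod_cast hτ

lemma add_le_of_lt_of_consecutive_gap {k r : ℕ} {f : Fin k → ℕ} (hf : StrictMono f)
    (hgap : ∀ i j : Fin k, (i : ℕ) + 1 = j → r ≤ f j - f i) {i j : Fin k} (hij : i < j) :
    f i + r ≤ f j := by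
  obtain ⟨d, hd⟩ : ∃ d, (j : ℕ) = i + d + 1 := ⟨j - i - 1, by have := Fin.lt_def.mp hij; omega⟩
  induction d generalizing j with
  | zero => have := hgap i j hd.symm; have := hf hij; omega
  | succ d ih =>
    let j' : Fin k := ⟨i + d + 1, by omega⟩
    have := ih (j := j') (Fin.lt_def.mpr (by simp [j'])) rfl
    have := hf (show j' < j from Fin.lt_def.mpr (by simp [j']; omega))
    omega

lemma le_natDist_of_consecutive_gap {k r : ℕ} {f : Fin k → ℕ} (hf : StrictMono f)
    (hgap : ∀ i j : Fin k, (i : ℕ) + 1 = j → r ≤ f j - f i) {i j : Fin k} (hij : i ≠ j) :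
    r ≤ Nat.dist (f i) (f j) := by
  rcases hij.lt_or_gt with h | h
  · have := add_le_of_lt_of_consecutive_gap hf hgap h
    simp only [Nat.dist]; omega
  · have := add_le_of_lt_of_consecutive_gap hf hgap h
    simp only [Nat.dist]; omega

/-- If `P^{(1)}, …, P^{(k)}` are full rows of `G_{m,n}` at heights pairwise at least
`⌈√(kn)⌉` apart, and `𝒫` is the union of their vertex sets, then
`⌈√(kn)⌉ ≤ b(G_{m,n}, 𝒫) ≤ ⌈√(kn)⌉ + k - 1`. -/
theorem pburn_far_rows (m n k : ℕ) (hk : 1 ≤ k) (hn : 1 ≤ n)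
    (hgt : Fin k → Fin m) (hmono : StrictMono hgt)
    (hgap : ∀ i j : Fin k, (i : ℕ) + 1 = (j : ℕ) →
      ⌈Real.sqrt (k * n)⌉₊ ≤ (hgt j : ℕ) - (hgt i : ℕ)) :
    ⌈Real.sqrt (k * n)⌉₊ ≤
        pburn (gridGraph m n) {p : Fin m × Fin n | ∃ i : Fin k, p.1 = hgt i} ∧
      pburn (gridGraph m n) {p : Fin m × Fin n | ∃ i : Fin k, p.1 = hgt i} ≤
        ⌈Real.sqrt (k * n)⌉₊ + k - 1 := by
  obtain ⟨s, hs⟩ := exists_rows_subset_burnSet hk hn hgt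
  refine ⟨le_csInf ⟨_, s, hs⟩ fun t ⟨s', hs'⟩ => ?_, Nat.sInf_le ⟨s, hs⟩⟩
  by_contra! ht
  let R : Finset (Fin m × Fin n) := univ.map ⟨hgt, hmono.injective⟩ ×ˢ univ
  have hR : (R : Set (Fin m × Fin n)) = {p | ∃ i : Fin k, p.1 = hgt i} := by
    ext p
    simp [R, eq_comm]
  have hsep : ∀ p ∈ R, ∀ q ∈ R, p.1 ≠ q.1 → t < Nat.dist p.1 q.1 := by
    intro p hp q hq hpq
    rw [← mem_coe, hR] at hp hq
    obtain ⟨i, hi⟩ := hp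
    obtain ⟨j, hj⟩ := hq
    rw [hi, hj] at hpq ⊢
    exact ht.trans_le (le_natDist_of_consecutive_gap (Fin.val_strictMono.comp hmono) hgap
      fun h => hpq (congrArg hgt h))
  have hcard : k * n ≤ t ^ 2 := by
    simpa [R] using card_le_sq_of_subset_burnSet
      (fun v ρ hρ => card_filter_gridGraph_edist_le
        (fun p hp q hq hpq => hρ.trans (hsep p hp q hq hpq)) v) (hR ▸ hs')
  exact (lt_ceil_sqrt_iff.mp ht).not_ge (by exact_mod_cast hcard)
end

section
/- If m = o(√n), then b(G_{m,n}) = (1 + o(1))√n; more precisely, ⌈√n⌉ ≤ b(G_{m,n}) ≤ ⌈√n⌉ + ⌈m/2⌉. -/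
open SimpleGraph

/-!
Every vertex of a row of `G_{m,n}` must be reached by fire, and projecting onto the row turns any
burning of the grid into a burning of the path `P_n` with the same number of rounds. In `r` rounds
the source lit in round `t + 1` burns an interval of at most `2 (r - 1 - t) + 1` vertices, so
`n ≤ 1 + 3 + ⋯ + (2r - 1) = r²`. Conversely `P_n` with `n ≤ r²` is burned in `r` rounds by sources
centred in consecutive intervals of lengths `2r - 1, 2r - 3, …, 1`; lighting the same columns in the
middle row of the grid costs `⌊m/2⌋` extra rounds to reach the top and bottom rows. Since
`m = o(√n)`, the two bounds squeeze `b(G_{m,n})` to `√n (1 + o(1))`.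
-/

open Asymptotics Filter Finset

namespace SimpleGraph

section Burning

variable {V W : Type*} {G : SimpleGraph V} {s : ℕ → V}

lemma burnSet_mono {t t' : ℕ} (h : t ≤ t') : burnSet G s t ⊆ burnSet G s t' := by
  induction h with
  | refl => exact subset_rfl
  | step _ ih => exact ih.trans fun w hw => Or.inl (Or.inl hw)

lemma mem_burnSet_add_length {u w : V} {t : ℕ} (hu : u ∈ burnSet G s t) (p : G.Walk u w) :
    w ∈ burnSet G s (t + p.length) := by
  induction p generalizing t with
  | nil => exact hu
  | cons h q ih =>
    rw [Walk.length_cons, ← add_assoc, add_right_comm]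
    exact ih (Or.inl (Or.inr ⟨_, hu, h⟩))

lemma mem_burnSet_of_walk {t r : ℕ} {w : V} (p : G.Walk (s t) w) (h : t + 1 + p.length ≤ r) :
    w ∈ burnSet G s r :=
  burnSet_mono h (mem_burnSet_add_length (Or.inr rfl) p)

lemma exists_walk_of_mem_burnSet {r : ℕ} {w : V} (hw : w ∈ burnSet G s r) :
    ∃ t, ∃ p : G.Walk (s t) w, t + 1 + p.length ≤ r := by
  induction r generalizing w with
  | zero => simp [burnSet] at hw
  | succ k ih =>
    rcases hw with (hw | ⟨u, hu, hadj⟩) | rfl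
    · obtain ⟨t, p, hp⟩ := ih hw
      exact ⟨t, p, by omega⟩
    · obtain ⟨t, p, hp⟩ := ih hu
      exact ⟨t, p.concat hadj, by rw [Walk.length_concat]; omega⟩
    · exact ⟨k, Walk.nil, by simp⟩

lemma image_burnSet_subset {H : SimpleGraph W} {f : V → W}
    (hf : ∀ u v, G.Adj u v → f u = f v ∨ H.Adj (f u) (f v)) (t : ℕ) :
    f '' burnSet G s t ⊆ burnSet H (f ∘ s) t := by
  induction t with
  | zero => simp [burnSet]
  | succ k ih =>
    rintro _ ⟨w, (hw | ⟨u, hu, hadj⟩) | rfl, rfl⟩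
    · exact Or.inl (Or.inl (ih ⟨w, hw, rfl⟩))
    · rcases hf u w hadj with heq | hadj'
      · exact Or.inl (Or.inl (heq ▸ ih ⟨u, hu, rfl⟩))
      · exact Or.inl (Or.inr ⟨f u, ih ⟨u, hu, rfl⟩, hadj'⟩)
    · exact Or.inr rfl

lemma burn_le_of_univ_subset_burnSet {r : ℕ} (h : Set.univ ⊆ burnSet G s r) : burn G ≤ r :=
  Nat.sInf_le ⟨s, h⟩

lemma exists_univ_subset_burnSet_burn (h : ∃ r, ∃ s : ℕ → V, Set.univ ⊆ burnSet G s r) :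
    ∃ s : ℕ → V, Set.univ ⊆ burnSet G s (burn G) :=
  Nat.sInf_mem h

end Burning

section BoxProd

variable {α β : Type*} {G : SimpleGraph α} {H : SimpleGraph β} {r : ℕ}

lemma Walk.length_boxProdLeft {a₁ a₂ : α} (b : β) (p : G.Walk a₁ a₂) :
    (p.boxProdLeft H b).length = p.length :=
  Walk.length_map _ _

lemma Walk.length_boxProdRight {b₁ b₂ : β} (a : α) (q : H.Walk b₁ b₂) :
    (q.boxProdRight G a).length = q.length :=
  Walk.length_map _ _

lemma univ_subset_burnSet_boxProd {s : ℕ → β} {e : ℕ} (c : α)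
    (hc : ∀ x, ∃ p : G.Walk c x, p.length ≤ e) (hs : Set.univ ⊆ burnSet H s r) :
    Set.univ ⊆ burnSet (G □ H) (fun t => (c, s t)) (r + e) := by
  rintro ⟨x, y⟩ -
  obtain ⟨t, q, hq⟩ := exists_walk_of_mem_burnSet (hs (Set.mem_univ y))
  obtain ⟨p, hp⟩ := hc x
  refine mem_burnSet_of_walk ((q.boxProdRight G c).append (p.boxProdLeft H y)) ?_
  rw [Walk.length_append, Walk.length_boxProdLeft, Walk.length_boxProdRight]
  omega

lemma univ_subset_burnSet_of_boxProd [Nonempty α] {s : ℕ → α × β}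
    (hs : Set.univ ⊆ burnSet (G □ H) s r) : Set.univ ⊆ burnSet H (Prod.snd ∘ s) r := by
  intro y _
  refine image_burnSet_subset (fun u v huv => ?_) r ⟨(Classical.arbitrary α, y), hs trivial, rfl⟩
  rcases boxProd_adj.mp huv with ⟨_, h⟩ | ⟨h, _⟩
  exacts [Or.inl h, Or.inr h]

end BoxProd

section PathGraph

variable {n : ℕ}

lemma exists_walk_pathGraph_length_eq (i j : Fin n) :
    ∃ p : (pathGraph n).Walk i j, p.length = Nat.dist i j := by
  wlog hij : i ≤ j generalizing i j
  · obtain ⟨p, hp⟩ := this j i (le_of_not_ge hij)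
    exact ⟨p.reverse, by rw [Walk.length_reverse, hp, Nat.dist_comm]⟩
  rw [Nat.dist_eq_sub_of_le hij]
  obtain ⟨d, hd⟩ := Nat.exists_eq_add_of_le (Fin.le_def.mp hij)
  induction d generalizing j with
  | zero =>
    obtain rfl : j = i := Fin.ext hd
    exact ⟨Walk.nil, by simp⟩
  | succ d ih =>
    let j' : Fin n := ⟨i + d, by omega⟩
    obtain ⟨p, hp⟩ := ih j' (Fin.le_def.mpr (by simp [j'])) rfl
    have hadj : (pathGraph n).Adj j' j := pathGraph_adj.mpr (Or.inl (by simp [j', hd]; omega))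
    exact ⟨p.concat hadj, by simp only [Walk.length_concat, hp, j']; omega⟩

lemma dist_le_length_pathGraph {i j : Fin n} (p : (pathGraph n).Walk i j) :
    Nat.dist i j ≤ p.length := by
  induction p with
  | nil => simp
  | cons h q ih =>
    rw [Walk.length_cons]
    have := pathGraph_adj.mp h
    unfold Nat.dist at ih ⊢
    omega

lemma exists_le_lt_succ {a : ℕ → ℕ} (h₀ : a 0 = 0) {y r : ℕ} (hy : y < a r) :
    ∃ i < r, a i ≤ y ∧ y < a (i + 1) := by
  induction r with
  | zero => omega
  | succ r ih =>
    by_cases hr : y < a r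
    · obtain ⟨i, hi, h⟩ := ih hr
      exact ⟨i, by omega, h⟩
    · exact ⟨r, by omega, by omega, hy⟩

/-- The source of round `i + 1` sits `r - 1 - i` columns after the `i (2r - i)` columns covered by
the earlier rounds, clamped to the last column. -/
lemma exists_univ_subset_burnSet_pathGraph (hn : 0 < n) {r : ℕ} (h : n ≤ r * r) :
    ∃ s : ℕ → Fin n, Set.univ ⊆ burnSet (pathGraph n) s r := by
  let a : ℕ → ℕ := fun i => i * (2 * r - i)
  let s : ℕ → Fin n := fun i => ⟨min (a i + (r - 1 - i)) (n - 1), by omega⟩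
  refine ⟨s, fun y _ => ?_⟩
  have har : a r = r * r := by simp only [a]; rw [show 2 * r - r = r by omega]
  obtain ⟨i, hi, hlo, hhi⟩ := exists_le_lt_succ (a := a) (by simp [a]) (y.isLt.trans_le (har ▸ h))
  obtain ⟨k, rfl⟩ : ∃ k, r = i + k + 1 := ⟨r - 1 - i, by omega⟩
  have hstep : a (i + 1) = a i + 2 * k + 1 := by
    simp only [a, show 2 * (i + k + 1) - i = i + 2 * k + 2 by omega,
      show 2 * (i + k + 1) - (i + 1) = i + 2 * k + 1 by omega]
    ring
  obtain ⟨p, hp⟩ := exists_walk_pathGraph_length_eq (s i) y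
  refine mem_burnSet_of_walk p ?_
  have := y.isLt
  simp only [hp, Nat.dist, s] at hhi ⊢
  omega

lemma sum_range_two_mul_add_one (r : ℕ) : ∑ t ∈ range r, (2 * t + 1) = r * r := by
  induction r with
  | zero => rfl
  | succ r ih => rw [sum_range_succ, ih]; ring

lemma le_mul_self_of_univ_subset_burnSet_pathGraph {s : ℕ → Fin n} {r : ℕ}
    (h : Set.univ ⊆ burnSet (pathGraph n) s r) : n ≤ r * r := by
  let ball : ℕ → Finset ℕ := fun t => Icc (s t - (r - 1 - t)) (s t + (r - 1 - t))
  have hcover : range n ⊆ (range r).biUnion ball := fun y hy => by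
    obtain ⟨t, p, hp⟩ := exists_walk_of_mem_burnSet (h (Set.mem_univ ⟨y, mem_range.mp hy⟩))
    have := dist_le_length_pathGraph p
    simp only [Nat.dist] at this
    exact mem_biUnion.mpr ⟨t, mem_range.mpr (by omega), mem_Icc.mpr (by omega)⟩
  calc n = #(range n) := (card_range n).symm
    _ ≤ ∑ t ∈ range r, #(ball t) := (card_le_card hcover).trans card_biUnion_le
    _ ≤ ∑ t ∈ range r, (2 * (r - 1 - t) + 1) :=
        sum_le_sum fun t _ => by rw [Nat.card_Icc]; omega
    _ = ∑ t ∈ range r, (2 * t + 1) := sum_range_reflect (fun t => 2 * t + 1) r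
    _ = r * r := sum_range_two_mul_add_one r

end PathGraph

end SimpleGraph

open SimpleGraph

lemma Nat.ceil_sqrt_le_iff {n r : ℕ} : ⌈√(n : ℝ)⌉₊ ≤ r ↔ n ≤ r * r := by
  rw [Nat.ceil_le, Real.sqrt_le_left (Nat.cast_nonneg r), sq]
  exact_mod_cast Iff.rfl

lemma burn_gridGraph_bounds {m n : ℕ} (hm : 1 ≤ m) (hn : 1 ≤ n) :
    ⌈√(n : ℝ)⌉₊ ≤ burn (gridGraph m n) ∧ burn (gridGraph m n) ≤ ⌈√(n : ℝ)⌉₊ + (m + 1) / 2 := by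
  have : Nonempty (Fin m) := ⟨⟨0, hm⟩⟩
  obtain ⟨s, hs⟩ := exists_univ_subset_burnSet_pathGraph hn (Nat.ceil_sqrt_le_iff.mp le_rfl)
  have hcentre (x : Fin m) :
      ∃ p : (pathGraph m).Walk ⟨(m - 1) / 2, by omega⟩ x, p.length ≤ m / 2 := by
    obtain ⟨p, hp⟩ := exists_walk_pathGraph_length_eq ⟨(m - 1) / 2, by omega⟩ x
    exact ⟨p, by have := x.isLt; simp only [hp, Nat.dist]; omega⟩
  have hgrid := univ_subset_burnSet_boxProd _ hcentre hs
  obtain ⟨s', hs'⟩ := exists_univ_subset_burnSet_burn ⟨_, _, hgrid⟩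
  refine ⟨Nat.ceil_sqrt_le_iff.mpr ?_, (burn_le_of_univ_subset_burnSet hgrid).trans (by omega)⟩
  exact le_mul_self_of_univ_subset_burnSet_pathGraph (univ_subset_burnSet_of_boxProd hs')

lemma abs_burn_gridGraph_sub_sqrt_le {m n : ℕ} (hm : 1 ≤ m) (hn : 1 ≤ n) :
    |(burn (gridGraph m n) : ℝ) - √(n : ℝ)| ≤ m + 1 := by
  obtain ⟨hlo, hhi⟩ := burn_gridGraph_bounds hm hn
  have hceil := Nat.ceil_lt_add_one (Real.sqrt_nonneg (n : ℝ))
  have hlo' : √(n : ℝ) ≤ burn (gridGraph m n) := Nat.ceil_le.mp hlo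
  have hhi' : (burn (gridGraph m n) : ℝ) ≤ ⌈√(n : ℝ)⌉₊ + m := by
    exact_mod_cast hhi.trans (by omega)
  rw [abs_of_nonneg (by linarith)]
  linarith

/-- If `m = o(√n)` then `b(G_{m,n}) = (1 + o(1))√n`; more precisely,
`⌈√n⌉ ≤ b(G_{m,n}) ≤ ⌈√n⌉ + ⌈m/2⌉`. -/
theorem burn_grid_small_m (m : ℕ → ℕ) (hm1 : ∀ n, 1 ≤ m n)
    (hm : Asymptotics.IsLittleO Filter.atTop (fun n : ℕ => (m n : ℝ)) (fun n : ℕ => Real.sqrt n)) :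
    (∀ n : ℕ, 1 ≤ n →
        ⌈Real.sqrt n⌉₊ ≤ burn (gridGraph (m n) n) ∧
          burn (gridGraph (m n) n) ≤ ⌈Real.sqrt n⌉₊ + (m n + 1) / 2) ∧
      Asymptotics.IsEquivalent Filter.atTop
        (fun n : ℕ => (burn (gridGraph (m n) n) : ℝ)) (fun n : ℕ => Real.sqrt n) := by
  refine ⟨fun n hn => burn_gridGraph_bounds (hm1 n) hn, ?_⟩
  have hdiff : (fun n : ℕ => (burn (gridGraph (m n) n) : ℝ) - Real.sqrt n) =O[atTop]
      (fun n : ℕ => (m n : ℝ) + 1) := by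
    refine IsBigO.of_bound 1 ?_
    filter_upwards [eventually_ge_atTop 1] with n hn
    rw [one_mul, Real.norm_eq_abs, Real.norm_of_nonneg (by positivity)]
    exact abs_burn_gridGraph_sub_sqrt_le (hm1 n) hn
  have hsqrt : Tendsto (fun n : ℕ => ‖Real.sqrt n‖) atTop atTop :=
    tendsto_norm_atTop_atTop.comp (Real.tendsto_sqrt_atTop.comp tendsto_natCast_atTop_atTop)
  exact hdiff.trans_isLittleO (hm.add ((isLittleO_one_left_iff ℝ).mpr hsqrt))
end
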